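/- Let 0 < α < 1, a_i = (i+1)^{1-α} - i^{1-α}, and p_n defined by p_0 = 1 and p_n = Σ_{j=1}^{n}(a_{j-1}-a_j)p_{n-j}. Then Γ(2-α) Σ_{j=1}^{n} p_{n-j} ≤ n^{α} / Γ(1+α) for every n ≥ 1. -/

import Mathlib

noncomputable def L1a (α : ℝ) (i : ℕ) : ℝ := ((i : ℝ) + 1) ^ (1 - α) - (i : ℝ) ^ (1 - α)

noncomputable def L1p (α : ℝ) : ℕ → ℝ
  | 0 => 1
  | n + 1 => ∑ j : Fin (n + 1), (L1a α j - L1a α (j + 1)) * L1p α (n - j)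

/-!
`L1p α` is the complementary kernel of `a = L1a α`: `∑_{i+j=n} a_i p_j = 1` for all `n`, i.e.
`A * P = 1 / (1 - X)` for the generating series, and `p ≥ 0` because `a` is decreasing
(`t ↦ t ^ (1 - α)` is concave). Put `b_k = (k + 1) ^ α - k ^ α = L1a (1 - α) k`. The key estimate is
`Γ(2 - α) Γ(1 + α) ≤ (B * A)_m` for every `m`: write `Γ(2 - α) Γ(1 + α) = α (1 - α) Γ(α) Γ(1 - α)`
as `α (1 - α) ∫₀^{m+1} u ^ (α - 1) (m + 1 - u) ^ (-α) du`, split it over unit intervals and bound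
each piece by Chebyshev's integral inequality (one factor decreases, the other increases); the
product of the two integrals over `[k, k + 1]` is `b_k a_{m-k} / (α (1 - α))`. Hence
`Γ(2 - α) Γ(1 + α) ∑_{j ≤ m} p_j ≤ (P * (B * A))_m = (B * (A * P))_m = ∑_{k ≤ m} b_k = (m + 1) ^ α`.
-/

open Finset

section ComplementaryKernel

variable {α : ℝ}

lemma L1p_succ (n : ℕ) :
    L1p α (n + 1) = ∑ x ∈ antidiagonal n, (L1a α x.1 - L1a α (x.1 + 1)) * L1p α x.2 := by
  rw [L1p, Fin.sum_univ_eq_sum_range (fun j => (L1a α j - L1a α (j + 1)) * L1p α (n - j)),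
    Nat.sum_antidiagonal_eq_sum_range_succ_mk]

lemma L1a_zero (hα : α ≠ 1) : L1a α 0 = 1 := by
  simp [L1a, Real.zero_rpow (sub_ne_zero.mpr hα.symm)]

lemma L1a_succ_le (hα0 : 0 ≤ α) (hα1 : α ≤ 1) (i : ℕ) : L1a α (i + 1) ≤ L1a α i := by
  have h := (Real.concaveOn_rpow (p := 1 - α) (by linarith) (by linarith)).slope_anti_adjacent
    (x := i) (y := i + 1) (z := i + 1 + 1) (by simp) (by simp; positivity) (by linarith)
    (by linarith)
  simpa [L1a] using h

lemma L1p_nonneg (hα0 : 0 ≤ α) (hα1 : α ≤ 1) (n : ℕ) : 0 ≤ L1p α n := by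
  induction n using Nat.strong_induction_on with
  | _ n ih =>
    rcases n with _ | n
    · simp [L1p]
    · rw [L1p_succ]
      refine sum_nonneg fun x hx => mul_nonneg ?_ (ih _ ?_)
      · linarith [L1a_succ_le hα0 hα1 x.1]
      · exact Nat.antidiagonal.snd_lt hx

theorem sum_antidiagonal_L1a_mul_L1p (hα : α ≠ 1) (n : ℕ) :
    ∑ x ∈ antidiagonal n, L1a α x.1 * L1p α x.2 = 1 := by
  induction n with
  | zero => simp [L1a_zero hα, L1p]
  | succ n ih =>
    rw [Nat.sum_antidiagonal_succ, L1a_zero hα, one_mul, L1p_succ, ← ih, ← sum_add_distrib]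
    exact sum_congr rfl fun x _ => by ring

lemma sum_range_L1a (hα : α ≠ 1) (n : ℕ) : ∑ i ∈ range n, L1a α i = (n : ℝ) ^ (1 - α) := by
  simpa only [L1a, Nat.cast_add, Nat.cast_one, Nat.cast_zero,
    Real.zero_rpow (sub_ne_zero.mpr hα.symm), sub_zero] using
    sum_range_sub (fun i : ℕ => (i : ℝ) ^ (1 - α)) n

end ComplementaryKernel

theorem mul_sub_nonpos_of_antitoneOn_of_monotoneOn {β : Type*} [LinearOrder β] {s : Set β}
    {f g : β → ℝ} (hf : AntitoneOn f s) (hg : MonotoneOn g s) {t u : β} (ht : t ∈ s)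
    (hu : u ∈ s) : (f u - f t) * (g u - g t) ≤ 0 := by
  rcases le_total u t with h | h
  · exact mul_nonpos_of_nonneg_of_nonpos (sub_nonneg.mpr (hf hu ht h))
      (sub_nonpos.mpr (hg hu ht h))
  · exact mul_nonpos_of_nonpos_of_nonneg (sub_nonpos.mpr (hf ht hu h))
      (sub_nonneg.mpr (hg ht hu h))

section BetaIntegral

open MeasureTheory Set intervalIntegral

theorem integral_mul_le_mul_integral_of_sign {f g : ℝ → ℝ} {a b c d : ℝ} (hab : a ≤ b)
    (hf : IntervalIntegrable f volume a b) (hg : IntervalIntegrable g volume a b)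
    (hfg : IntervalIntegrable (fun u => f u * g u) volume a b)
    (hd : (b - a) * d = ∫ u in a..b, f u)
    (hsign : ∀ u ∈ Ioo a b, (f u - d) * (g u - c) ≤ 0) :
    ∫ u in a..b, f u * g u ≤ d * ∫ u in a..b, g u := by
  have hnonpos : ∫ u in a..b, (f u - d) * (g u - c) ≤ 0 := by
    rw [intervalIntegral.integral_of_le hab, integral_Ioc_eq_integral_Ioo]
    exact setIntegral_nonpos measurableSet_Ioo hsign
  have hexpand : ∫ u in a..b, (f u - d) * (g u - c)
      = (∫ u in a..b, f u * g u) - d * ∫ u in a..b, g u := by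
    have h : ∀ u, (f u - d) * (g u - c) = f u * g u - d * g u - (c * f u - c * d) :=
      fun u => by ring
    simp_rw [h]
    rw [intervalIntegral.integral_sub (hfg.sub (hg.const_mul d))
        ((hf.const_mul c).sub intervalIntegrable_const),
      intervalIntegral.integral_sub hfg (hg.const_mul d),
      intervalIntegral.integral_sub (hf.const_mul c) intervalIntegrable_const,
      intervalIntegral.integral_const_mul, intervalIntegral.integral_const_mul,
      intervalIntegral.integral_const, smul_eq_mul, ← hd]
    ring
  linarith

lemma rpow_lt_integral_rpow {r x : ℝ} (hr : r < 0) (hr' : -1 < r) (hx : 0 ≤ x) :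
    (x + 1) ^ r < ∫ u in x..x + 1, u ^ r := by
  have hpos : 0 < ∫ u in x..x + 1, (u ^ r - (x + 1) ^ r) :=
    intervalIntegral.intervalIntegral_pos_of_pos_on
      ((intervalIntegrable_rpow' hr').sub intervalIntegrable_const)
      (fun u hu => sub_pos.mpr (Real.rpow_lt_rpow_of_neg (by linarith [hu.1]) hu.2 hr))
      (by linarith)
  rw [intervalIntegral.integral_sub (intervalIntegrable_rpow' hr') intervalIntegrable_const,
    intervalIntegral.integral_const, smul_eq_mul, add_sub_cancel_left, one_mul] at hpos
  linarith

lemma intervalIntegrable_rpow_mul_sub_rpow {s t T x y : ℝ} (hs : 0 < s) (ht : 0 < t)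
    (hT : 0 < T) (hx : 0 ≤ x) (hxy : x ≤ y) (hyT : y ≤ T) :
    IntervalIntegrable (fun u => u ^ (s - 1) * (T - u) ^ (t - 1)) volume x y := by
  have hsub : IntervalIntegrable (fun u => (T - u) ^ (t - 1)) volume (T / 2) T := by
    have h := ((intervalIntegrable_rpow' (a := 0) (b := T / 2) (r := t - 1)
      (by linarith)).comp_sub_left T).symm
    rwa [sub_zero, sub_half] at h
  have hleft :
      IntervalIntegrable (fun u => u ^ (s - 1) * (T - u) ^ (t - 1)) volume 0 (T / 2) := by
    refine (intervalIntegrable_rpow' (by linarith)).mul_continuousOn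
      (ContinuousOn.rpow_const (by fun_prop) fun u hu => Or.inl ?_)
    rw [Set.uIcc_of_le (by linarith)] at hu
    exact (sub_pos.mpr (by linarith [hu.2])).ne'
  have hright :
      IntervalIntegrable (fun u => u ^ (s - 1) * (T - u) ^ (t - 1)) volume (T / 2) T := by
    refine hsub.continuousOn_mul (ContinuousOn.rpow_const (by fun_prop) fun u hu => Or.inl ?_)
    rw [Set.uIcc_of_le (by linarith)] at hu
    exact (by linarith [hu.1] : 0 < u).ne'
  refine (hleft.trans hright).mono_set ?_
  rw [Set.uIcc_of_le hxy, Set.uIcc_of_le hT.le]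
  exact Icc_subset_Icc hx hyT

theorem integral_rpow_mul_sub_rpow {s t T : ℝ} (hs : 0 < s) (ht : 0 < t) (hT : 0 < T) :
    ∫ u in (0 : ℝ)..T, u ^ (s - 1) * (T - u) ^ (t - 1)
      = T ^ (s + t - 1) * (Real.Gamma s * Real.Gamma t / Real.Gamma (s + t)) := by
  have hΓ : Complex.Gamma (s + t) ≠ 0 := by
    rw [← Complex.ofReal_add, Complex.Gamma_ofReal]
    exact_mod_cast (Real.Gamma_pos_of_pos (add_pos hs ht)).ne'
  have hbeta :
      Complex.betaIntegral s t = Complex.Gamma s * Complex.Gamma t / Complex.Gamma (s + t) :=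
    eq_div_of_mul_eq hΓ <| by
      rw [mul_comm, Complex.Gamma_mul_Gamma_eq_betaIntegral (by simpa) (by simpa)]
  have hscaled := Complex.betaIntegral_scaled s t hT
  rw [hbeta] at hscaled
  apply Complex.ofReal_injective
  rw [← intervalIntegral.integral_ofReal]
  convert hscaled using 1
  · refine integral_congr fun u hu => ?_
    rw [Set.uIcc_of_le hT.le] at hu
    push_cast
    rw [Complex.ofReal_cpow hu.1, Complex.ofReal_cpow (sub_nonneg.mpr hu.2)]
    push_cast
    ring
  · push_cast
    rw [Complex.ofReal_cpow hT.le, ← Complex.Gamma_ofReal, ← Complex.Gamma_ofReal,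
      ← Complex.Gamma_ofReal]
    push_cast
    ring

theorem integral_rpow_mul_sub_rpow_le {α T x : ℝ} (hα0 : 0 < α) (hα1 : α < 1) (hx : 0 ≤ x)
    (hxT : x + 1 ≤ T) :
    ∫ u in x..x + 1, u ^ (α - 1) * (T - u) ^ (-α)
      ≤ (∫ u in x..x + 1, u ^ (α - 1)) * ∫ u in x..x + 1, (T - u) ^ (-α) := by
  set F := ∫ u in x..x + 1, u ^ (α - 1)
  have hF : (x + 1) ^ (α - 1) < F := rpow_lt_integral_rpow (by linarith) (by linarith) hx
  have hF0 : 0 < F := lt_trans (by positivity) hF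
  -- `t` is where `u ↦ u ^ (α - 1)` takes its mean value `F` over `[x, x + 1]`
  set t := F ^ (α - 1)⁻¹
  have hα_ne : α - 1 ≠ 0 := by linarith
  have hFt : t ^ (α - 1) = F := by
    rw [← Real.rpow_mul hF0.le, inv_mul_cancel₀ hα_ne, Real.rpow_one]
  have ht0 : 0 < t := by positivity
  have htT : t < T := by
    have h :=
      Real.rpow_lt_rpow_of_neg (by positivity) hF (inv_lt_zero.mpr (by linarith : α - 1 < 0))
    rw [← Real.rpow_mul (by linarith : (0 : ℝ) ≤ x + 1), mul_inv_cancel₀ hα_ne,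
      Real.rpow_one] at h
    linarith
  have hf : AntitoneOn (fun u : ℝ => u ^ (α - 1)) (Ioo 0 T) :=
    (Real.antitoneOn_rpow_Ioi_of_exponent_nonpos (by linarith)).mono Ioo_subset_Ioi_self
  have hg : MonotoneOn (fun u : ℝ => (T - u) ^ (-α)) (Ioo 0 T) := fun _ _ v hv huv =>
    Real.rpow_le_rpow_of_nonpos (sub_pos.mpr hv.2) (by linarith) (by linarith)
  have hfg : IntervalIntegrable (fun u => u ^ (α - 1) * (T - u) ^ (-α)) volume x (x + 1) := by
    simpa only [sub_sub_cancel_left] using intervalIntegrable_rpow_mul_sub_rpow hα0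
      (sub_pos.mpr hα1) (by linarith) hx (by linarith) hxT
  have hg_int : IntervalIntegrable (fun u => (T - u) ^ (-α)) volume x (x + 1) := by
    simpa using ((intervalIntegrable_rpow' (a := T - (x + 1)) (b := T - x) (r := -α)
      (by linarith)).comp_sub_left T).symm
  refine integral_mul_le_mul_integral_of_sign (c := (T - t) ^ (-α)) (by linarith)
    (intervalIntegrable_rpow' (by linarith)) hg_int hfg (by rw [add_sub_cancel_left, one_mul])
    fun u hu => ?_
  have hu' : u ∈ Ioo 0 T := ⟨by linarith [hu.1], by linarith [hu.2]⟩
  rw [← hFt]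
  exact mul_sub_nonpos_of_antitoneOn_of_monotoneOn hf hg ⟨ht0, htT⟩ hu'

lemma L1a_eq_integral {α : ℝ} (hα : α < 1) (i : ℕ) :
    L1a α i = (1 - α) * ∫ u in (i : ℝ)..i + 1, u ^ (-α) := by
  rw [integral_rpow (Or.inl (by linarith)), neg_add_eq_sub, L1a]
  field_simp [sub_ne_zero.mpr hα.ne']

theorem Gamma_mul_Gamma_le_sum_L1a_mul_L1a {α : ℝ} (hα0 : 0 < α) (hα1 : α < 1) (m : ℕ) :
    Real.Gamma (2 - α) * Real.Gamma (1 + α)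
      ≤ ∑ k ∈ range (m + 1), L1a (1 - α) k * L1a α (m - k) := by
  set T : ℝ := m + 1 with hT_def
  have hT : 0 < T := by positivity
  have hΓ : Real.Gamma (2 - α) * Real.Gamma (1 + α)
      = α * (1 - α) * ∫ u in (0 : ℝ)..T, u ^ (α - 1) * (T - u) ^ (-α) := by
    have hbeta := integral_rpow_mul_sub_rpow hα0 (sub_pos.mpr hα1) hT
    simp only [sub_sub_cancel_left, add_sub_cancel, sub_self, Real.rpow_zero, Real.Gamma_one,
      div_one, one_mul] at hbeta
    rw [hbeta, show 2 - α = (1 - α) + 1 by ring, Real.Gamma_add_one (by linarith), add_comm,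
      Real.Gamma_add_one hα0.ne']
    ring
  have hpieces : ∀ k < m + 1, IntervalIntegrable (fun u => u ^ (α - 1) * (T - u) ^ (-α)) volume
      (k : ℝ) ((k + 1 : ℕ) : ℝ) := fun k hk => by
    have hk : (k : ℝ) + 1 ≤ T := by rw [hT_def]; exact_mod_cast hk
    push_cast
    simpa only [sub_sub_cancel_left] using intervalIntegrable_rpow_mul_sub_rpow hα0
      (sub_pos.mpr hα1) hT (Nat.cast_nonneg k) (by linarith) hk
  have hsplit := sum_integral_adjacent_intervals hpieces
  simp only [Nat.cast_add, Nat.cast_one, Nat.cast_zero, ← hT_def] at hsplit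
  have hterm : ∀ k ∈ range (m + 1), L1a (1 - α) k * L1a α (m - k)
      = α * (1 - α) * ((∫ u in (k : ℝ)..k + 1, u ^ (α - 1))
        * ∫ u in (k : ℝ)..k + 1, (T - u) ^ (-α)) := fun k hk => by
    have hkm : k ≤ m := Nat.lt_succ_iff.mp (mem_range.mp hk)
    rw [L1a_eq_integral (by linarith), L1a_eq_integral hα1, sub_sub_cancel, neg_sub,
      integral_comp_sub_left (fun u => u ^ (-α)), Nat.cast_sub hkm,
      show T - (k + 1) = m - k by ring, show T - k = m - k + 1 by ring]
    ring
  calc Real.Gamma (2 - α) * Real.Gamma (1 + α)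
      = α * (1 - α) *
          ∑ k ∈ range (m + 1), ∫ u in (k : ℝ)..k + 1, u ^ (α - 1) * (T - u) ^ (-α) := by
        rw [hΓ, hsplit]
    _ ≤ α * (1 - α) * ∑ k ∈ range (m + 1), (∫ u in (k : ℝ)..k + 1, u ^ (α - 1))
          * ∫ u in (k : ℝ)..k + 1, (T - u) ^ (-α) := by
        gcongr with k hk
        exact integral_rpow_mul_sub_rpow_le hα0 hα1 (Nat.cast_nonneg k) (by
          rw [hT_def]; exact_mod_cast mem_range.mp hk)
    _ = ∑ k ∈ range (m + 1), L1a (1 - α) k * L1a α (m - k) := by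
        rw [mul_sum]; exact (sum_congr rfl hterm).symm

end BetaIntegral

theorem Gamma_mul_Gamma_mul_sum_range_L1p_le {α : ℝ} (hα0 : 0 < α) (hα1 : α < 1) (n : ℕ) :
    Real.Gamma (2 - α) * Real.Gamma (1 + α) * ∑ j ∈ range n, L1p α j ≤ (n : ℝ) ^ α := by
  rcases n with _ | m
  · simp [Real.zero_rpow hα0.ne']
  set κ := Real.Gamma (2 - α) * Real.Gamma (1 + α)
  set A := PowerSeries.mk (L1a α)
  set B := PowerSeries.mk (L1a (1 - α))
  set P := PowerSeries.mk (L1p α)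
  have hAP : ∀ k, PowerSeries.coeff k (A * P) = 1 := fun k => by
    simpa [A, P, PowerSeries.coeff_mul] using sum_antidiagonal_L1a_mul_L1p hα1.ne k
  have hBA : ∀ k, κ ≤ PowerSeries.coeff k (B * A) := fun k => by
    simpa [A, B, PowerSeries.coeff_mul, Nat.sum_antidiagonal_eq_sum_range_succ_mk] using
      Gamma_mul_Gamma_le_sum_L1a_mul_L1a hα0 hα1 k
  calc κ * ∑ j ∈ range (m + 1), L1p α j
      = ∑ x ∈ antidiagonal m, L1p α x.1 * κ := by
        rw [mul_comm, sum_mul, Nat.sum_antidiagonal_eq_sum_range_succ_mk]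
    _ ≤ ∑ x ∈ antidiagonal m, L1p α x.1 * PowerSeries.coeff x.2 (B * A) := by
        gcongr with x
        · exact L1p_nonneg hα0.le hα1.le _
        · exact hBA x.2
    _ = PowerSeries.coeff m (B * (A * P)) := by
        rw [show B * (A * P) = P * (B * A) by ring, PowerSeries.coeff_mul]
        simp only [P, PowerSeries.coeff_mk]
    _ = ∑ k ∈ range (m + 1), L1a (1 - α) k := by
        simp [PowerSeries.coeff_mul, hAP, B, Nat.sum_antidiagonal_eq_sum_range_succ_mk]
    _ = ((m + 1 : ℕ) : ℝ) ^ α := by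
        rw [sum_range_L1a (by linarith), sub_sub_cancel]

theorem L1p_sum_bound_general (α : ℝ) (hα0 : 0 < α) (hα1 : α < 1) (n : ℕ) :
    Real.Gamma (2 - α) * ∑ j ∈ Finset.Icc 1 n, L1p α (n - j)
      ≤ (n : ℝ) ^ α / Real.Gamma (1 + α) := by
  have hsum : ∑ j ∈ Icc 1 n, L1p α (n - j) = ∑ j ∈ range n, L1p α j := by
    refine sum_nbij' (fun j => n - j) (fun j => n - j) ?_ ?_ ?_ ?_ fun _ _ => rfl
    all_goals intro j hj; simp only [mem_Icc, mem_range] at hj ⊢; omega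
  rw [le_div_iff₀ (Real.Gamma_pos_of_pos (by linarith)), hsum, mul_right_comm]
  exact Gamma_mul_Gamma_mul_sum_range_L1p_le hα0 hα1 n

theorem L1p_sum_bound (α : ℝ) (hα0 : 0 < α) (hα1 : α < 1) (n : ℕ) (hn : 1 ≤ n) :
    Real.Gamma (2 - α) * ∑ j ∈ Finset.Icc 1 n, L1p α (n - j)
      ≤ (n : ℝ) ^ α / Real.Gamma (1 + α) :=
  L1p_sum_bound_general α hα0 hα1 n
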